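/- arXiv:2511.11469 — 5 statements merged into one kernel-verified Lean document; each statement's English description precedes it below -/
import Mathlib

section
/- Cross-ratio bound from the Ptolemy inequality (the paper's Lemma in Section 4): Let Y be a metric space and a, b, c, d ∈ Y, regarded as a quadrilateral with sides E = dist(a,b), D' = dist(b,c), E' = dist(c,d), D = dist(d,a) and diagonals F = dist(b,d), F' = dist(a,c). If these four points satisfy the Ptolemy inequality F·F' ≤ D·D' + E·E', then D·((F − D) + (F' − D')) ≤ 2·E·E'. In particular, when D > 0, one has F − D + F' − D' ≤ 2·E·E'/D. -/
/-- **Cross-ratio bound from the Ptolemy inequality.**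
For a quadrilateral `a b c d` in a metric space with sides `E = dist a b`,
`D' = dist b c`, `E' = dist c d`, `D = dist d a` and diagonals `F = dist b d`,
`F' = dist a c`, if the Ptolemy inequality `F·F' ≤ D·D' + E·E'` holds, then
`D·((F − D) + (F' − D')) ≤ 2·E·E'`, and moreover `F − D + F' − D' ≤ 2·E·E'/D`
whenever `D > 0`. -/
theorem cross_ratio_bound_of_ptolemy {Y : Type*} [MetricSpace Y] (a b c d : Y)
    (hptol : dist b d * dist a c ≤ dist d a * dist b c + dist a b * dist c d) :
    dist d a * ((dist b d - dist d a) + (dist a c - dist b c)) ≤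
      2 * (dist a b * dist c d) ∧
    (0 < dist d a →
      dist b d - dist d a + (dist a c - dist b c) ≤
        2 * (dist a b * dist c d) / dist d a) := by
  have h1 : dist b d ≤ dist b a + dist a d := dist_triangle b a d
  have h2 : dist d a ≤ dist d b + dist b a := dist_triangle d b a
  have h3 : dist d a ≤ dist d c + dist c a := dist_triangle d c a
  rw [dist_comm b a, dist_comm a d] at h1
  rw [dist_comm d b, dist_comm b a] at h2
  rw [dist_comm d c, dist_comm c a] at h3
  have hF' : (0:ℝ) ≤ dist a c := dist_nonneg
  have h4 : dist a c ≤ dist d a + dist c d := by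
    have := dist_triangle a d c
    rw [dist_comm a d, dist_comm d c] at this; linarith
  have hA : (dist b d - dist d a) * (dist d a - dist a c) ≤ dist a b * dist c d := by
    calc (dist b d - dist d a) * (dist d a - dist a c)
        ≤ |(dist b d - dist d a) * (dist d a - dist a c)| := le_abs_self _
      _ = |dist b d - dist d a| * |dist d a - dist a c| := abs_mul _ _
      _ ≤ dist a b * dist c d := by
          apply mul_le_mul (abs_le.mpr ⟨by linarith, by linarith⟩)
            (abs_le.mpr ⟨by linarith, by linarith⟩) (abs_nonneg _) dist_nonneg
  have e : dist b d * dist a c = dist d a * dist a c + (dist b d - dist d a) * dist a c := by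
    ring
  have e2 : dist d a * (dist b d - dist d a) - (dist b d - dist d a) * dist a c
      = (dist b d - dist d a) * (dist d a - dist a c) := by ring
  have hmain : dist d a * ((dist b d - dist d a) + (dist a c - dist b c)) ≤
      2 * (dist a b * dist c d) := by
    have expand : dist d a * ((dist b d - dist d a) + (dist a c - dist b c))
        = dist d a * (dist b d - dist d a) + (dist d a * dist a c - dist d a * dist b c) := by
      ring
    linarith [hA, hptol, e, e2, expand]
  refine ⟨hmain, fun hD => ?_⟩
  rw [le_div_iff₀ hD]
  linarith [hmain]
end

section
/- Inner parallel sets satisfy the exterior ball condition (the paper's Lemma 'exterior 1-ball'): Let X be a proper metric space, Ω ⊆ X an open subset, and ρ > 0. Define Ω_ρ = {x ∈ Ω : ρ ≤ infDist x (frontier Ω)}, the set of points of Ω at distance at least ρ from the boundary of Ω. Then for every point p in the topological frontier of Ω_ρ there exists q in the frontier of Ω with dist(p, q) = ρ such that the open ball Metric.ball q ρ is disjoint from Ω_ρ. -/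
/-- **Inner parallel sets satisfy the exterior ball condition.**
Let `X` be a proper metric space, `Ω ⊆ X` open and `ρ > 0`. Let
`Ωρ = {x ∈ Ω : ρ ≤ infDist x (frontier Ω)}` be the set of points of `Ω` at
distance at least `ρ` from the boundary of `Ω`. Then every point `p` of the
frontier of `Ωρ` lies on the boundary of a ball of radius `ρ` disjoint from `Ωρ`,
centered at a point of the frontier of `Ω`. -/
theorem inner_parallel_set_exterior_ball {X : Type*} [MetricSpace X] [ProperSpace X]
    (Ω : Set X) (hΩ : IsOpen Ω) (ρ : ℝ) (hρ : 0 < ρ) (p : X)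
    (hp : p ∈ frontier {x | x ∈ Ω ∧ ρ ≤ Metric.infDist x (frontier Ω)}) :
    ∃ q ∈ frontier Ω, dist p q = ρ ∧
      Disjoint (Metric.ball q ρ)
        {x | x ∈ Ω ∧ ρ ≤ Metric.infDist x (frontier Ω)} := by
  set S := {x | x ∈ Ω ∧ ρ ≤ Metric.infDist x (frontier Ω)} with hS
  have hpc : p ∈ closure S := hp.1
  have hpi : p ∉ interior S := hp.2
  have hge : ρ ≤ Metric.infDist p (frontier Ω) := by
    have hcl : IsClosed {x : X | ρ ≤ Metric.infDist x (frontier Ω)} :=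
      isClosed_le continuous_const (Metric.continuous_infDist_pt _)
    exact closure_minimal (fun x hx => hx.2) hcl hpc
  have hne : (frontier Ω).Nonempty := by
    by_contra h
    rw [Set.not_nonempty_iff_eq_empty] at h
    rw [h, Metric.infDist_empty] at hge
    linarith
  have hpf : p ∉ frontier Ω := fun h => by
    have := Metric.infDist_zero_of_mem h
    linarith
  have hpΩ : p ∈ Ω := by
    have h2 : p ∈ closure Ω := closure_mono (fun x hx => hx.1) hpc
    rw [closure_eq_interior_union_frontier, hΩ.interior_eq] at h2
    exact h2.resolve_right hpf
  have hle : Metric.infDist p (frontier Ω) ≤ ρ := by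
    by_contra h
    push_neg at h
    have hopen : IsOpen (Ω ∩ {x | ρ < Metric.infDist x (frontier Ω)}) :=
      hΩ.inter (isOpen_lt continuous_const (Metric.continuous_infDist_pt _))
    have hsub : Ω ∩ {x | ρ < Metric.infDist x (frontier Ω)} ⊆ S :=
      fun x hx => ⟨hx.1, le_of_lt hx.2⟩
    exact hpi (interior_maximal hsub hopen ⟨hpΩ, h⟩)
  have heq : Metric.infDist p (frontier Ω) = ρ := le_antisymm hle hge
  obtain ⟨q, hq, hqd⟩ := isClosed_frontier.exists_infDist_eq_dist hne p
  refine ⟨q, hq, by rw [← hqd, heq], ?_⟩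
  rw [Set.disjoint_left]
  intro x hx hxS
  have h1 : Metric.infDist x (frontier Ω) ≤ dist x q := Metric.infDist_le_dist_of_mem hq
  have h2 : dist x q < ρ := Metric.mem_ball.mp hx
  linarith [hxS.2]
end

section
/- Properness of the total function on a compact family of proper convex functions (the paper's Lemma 'convex proper functions', in the normed-space setting): Let E be a finite-dimensional real normed vector space and let S be a set of continuous functions E → ℝ such that: S is compact as a subset of C(E, ℝ) with the compact-open topology (i.e. with respect to locally uniform convergence); every f ∈ S is nonnegative and convex on all of E; and every f ∈ S is proper, meaning that for each C ∈ ℝ the sublevel set {y ∈ E : f y ≤ C} is compact. Then the total function is proper: for every C ∈ ℝ, the set {(f, y) ∈ C(E, ℝ) × E : f ∈ S and f y ≤ C} is compact. -/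
/-- **Properness of the total function on a compact family of proper convex
functions.** Let `E` be a finite-dimensional real normed vector space and `S` a
compact set of continuous functions `E → ℝ` (in the compact-open topology, i.e.
with respect to locally uniform convergence), each of which is nonnegative,
convex, and proper (all sublevel sets compact). Then the total function is
proper: for every `C`, the set `{(f, y) : f ∈ S, f y ≤ C}` is compact. -/
theorem total_function_proper {E : Type*} [NormedAddCommGroup E] [NormedSpace ℝ E]
    [FiniteDimensional ℝ E] (S : Set C(E, ℝ)) (hS : IsCompact S)
    (h_nonneg : ∀ f ∈ S, ∀ y : E, 0 ≤ f y)
    (h_convex : ∀ f ∈ S, ConvexOn ℝ Set.univ f)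
    (h_proper : ∀ f ∈ S, ∀ C : ℝ, IsCompact {y : E | f y ≤ C}) :
    ∀ C : ℝ, IsCompact {p : C(E, ℝ) × E | p.1 ∈ S ∧ p.1 p.2 ≤ C} := by
  intro C
  rcases S.eq_empty_or_nonempty with hSe | hne
  · have : {p : C(E, ℝ) × E | p.1 ∈ S ∧ p.1 p.2 ≤ C} = ∅ := by
      ext p; simp [hSe]
    rw [this]; exact isCompact_empty
  -- bound for value at 0
  obtain ⟨f₀, hf₀S, hM⟩ := hS.exists_isMaxOn hne
    ((continuous_eval_const (0 : E)).continuousOn)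
  set M := f₀ 0 with hMdef
  -- each f in S has a radius beyond which f > C + M + 1
  have hrad : ∀ f ∈ S, ∃ R > 0, ∀ y : E, ‖y‖ = R → C + M + 1 < f y := by
    intro f hf
    have hK := h_proper f hf (C + M + 1)
    obtain ⟨R, hR0, hRsub⟩ := hK.isBounded.subset_ball_lt 0 0
    refine ⟨R, hR0, fun y hy => ?_⟩
    by_contra h
    push_neg at h
    have hmem : y ∈ Metric.ball (0 : E) R := hRsub h
    rw [Metric.mem_ball, dist_zero_right, hy] at hmem
    exact lt_irrefl _ hmem
  choose! R hRpos hRgt using hrad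
  -- open cover of S
  have hcov := hS.elim_finite_subcover_image
    (b := S)
    (c := fun f => {g : C(E, ℝ) | Set.MapsTo g (Metric.sphere 0 (R f)) (Set.Ioi (C + M + 1))})
    (fun f hf => ContinuousMap.isOpen_setOf_mapsTo (isCompact_sphere 0 (R f)) isOpen_Ioi)
    (fun g hg => Set.mem_biUnion hg (fun y hy => hRgt g hg y (by
      simpa [mem_sphere_iff_norm] using hy)))
  obtain ⟨b', hb'S, hb'fin, hb'cov⟩ := hcov
  obtain ⟨R₀, hR₀⟩ := (hb'fin.image R).bddAbove
  -- uniform bound on sublevel sets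
  have hbound : ∀ g ∈ S, ∀ y : E, g y ≤ C → ‖y‖ ≤ R₀ := by
    intro g hg y hy
    obtain ⟨f, hf, hgU⟩ := Set.mem_iUnion₂.1 (hb'cov hg)
    by_contra hgt
    push_neg at hgt
    have hRfR₀ : R f ≤ R₀ := hR₀ (Set.mem_image_of_mem R hf)
    have hylarge : R f < ‖y‖ := lt_of_le_of_lt hRfR₀ hgt
    have hypos : (0:ℝ) < ‖y‖ := lt_trans (hRpos f (hb'S hf)) hylarge
    set t : ℝ := R f / ‖y‖ with ht
    have ht0 : 0 < t := div_pos (hRpos f (hb'S hf)) hypos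
    have ht1 : t < 1 := (div_lt_one hypos).2 hylarge
    have hz : ‖t • y‖ = R f := by
      rw [norm_smul, Real.norm_eq_abs, abs_of_pos ht0, ht,
        div_mul_cancel₀ _ (ne_of_gt hypos)]
    have hzmem : t • y ∈ Metric.sphere (0 : E) (R f) := by
      simpa [mem_sphere_iff_norm] using hz
    have hzgt : C + M + 1 < g (t • y) := hgU hzmem
    have hconv := (h_convex g hg).2 (Set.mem_univ y) (Set.mem_univ (0 : E))
      (le_of_lt ht0) (by linarith : (0:ℝ) ≤ 1 - t) (by ring)
    rw [smul_zero, add_zero] at hconv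
    have hg0 : g 0 ≤ M := hM hg
    have hgy0 : 0 ≤ g y := h_nonneg g hg y
    have hg00 : 0 ≤ g 0 := h_nonneg g hg 0
    rw [smul_eq_mul, smul_eq_mul] at hconv
    have h1 : t * g y ≤ g y := mul_le_of_le_one_left hgy0 ht1.le
    have h2 : (1 - t) * g 0 ≤ g 0 := mul_le_of_le_one_left hg00 (by linarith)
    linarith
  -- assemble
  have hsub : {p : C(E, ℝ) × E | p.1 ∈ S ∧ p.1 p.2 ≤ C} ⊆
      S ×ˢ Metric.closedBall 0 R₀ := by
    rintro ⟨g, y⟩ ⟨hgS, hgy⟩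
    exact ⟨hgS, by simpa [Metric.mem_closedBall, dist_zero_right] using hbound g hgS y hgy⟩
  have hclosed : IsClosed {p : C(E, ℝ) × E | p.1 ∈ S ∧ p.1 p.2 ≤ C} := by
    have h1 : IsClosed {p : C(E, ℝ) × E | p.1 ∈ S} :=
      hS.isClosed.preimage continuous_fst
    have h2 : IsClosed {p : C(E, ℝ) × E | p.1 p.2 ≤ C} :=
      isClosed_le ContinuousEval.continuous_eval continuous_const
    exact h1.inter h2
  exact (hS.prod (isCompact_closedBall (0 : E) R₀)).of_isClosed_subset hclosed hsub
end

section
/- Mollification of coarsely Lipschitz maps (the paper's Proposition 'Lipschitz', in the Euclidean setting): For every n ≥ 1 there is a constant C, depending only on n, with the following property. Let E be a real Banach space, L ≥ 0, and let f : ℝⁿ → E be a strongly measurable map that is L-coarsely Lipschitz, i.e. ‖f x − f z‖ ≤ L·(‖x − z‖ + 1) for all x, z ∈ ℝⁿ. Then there exists a map g : ℝⁿ → E that is Lipschitz with constant C·L and satisfies ‖g x − f x‖ ≤ 2·L for every x ∈ ℝⁿ. (One may take g x to be the Bochner average of f over the unit ball centered at x.) -/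
/-!
Take `g x` to be the average of `f` over the unit ball `B(x, 1)`. On `B(x, 1)` the map `f` takes
values in the closed convex ball of radius `2L` about `f x`, hence so does its average. When
`‖x - z‖ ≤ 1`, since `B(x, 1)` and `B(z, 1)` have the same volume, subtracting `f x` from `f` does
not change `g x - g z`, which becomes `vol(B)⁻¹` times the difference of the integrals of `f - f x`
over `B(x, 1) \ B(z, 1)` and `B(z, 1) \ B(x, 1)`. There `f - f x` is bounded by `3L`,
and `B(x, 1 - ‖x - z‖) ⊆ B(z, 1)` together with Bernoulli's inequality bounds the volume of each
difference by `n‖x - z‖ vol(B)`. For `‖x - z‖ > 1` the triangle inequality through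
`f x` and `f z` suffices.
-/

open MeasureTheory Metric Set Module

section SetIntegral

variable {α F : Type*} [MeasurableSpace α] [NormedAddCommGroup F] [NormedSpace ℝ F]
  {μ : Measure α} {s t : Set α}

theorem norm_setIntegral_sub_setIntegral_le {h : α → F} {M : ℝ} (hs : MeasurableSet s)
    (ht : MeasurableSet t) (hhs : IntegrableOn h s μ) (hht : IntegrableOn h t μ)
    (hμs : μ s < ⊤) (hμt : μ t < ⊤) (hM : ∀ y ∈ s ∪ t, ‖h y‖ ≤ M) :
    ‖∫ y in s, h y ∂μ - ∫ y in t, h y ∂μ‖ ≤ M * (μ.real (s \ t) + μ.real (t \ s)) := by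
  have hdiff : ∫ y in s, h y ∂μ - ∫ y in t, h y ∂μ
      = ∫ y in s \ t, h y ∂μ - ∫ y in t \ s, h y ∂μ := by
    rw [← integral_inter_add_sdiff ht hhs, ← integral_inter_add_sdiff hs hht, inter_comm t s]
    abel
  rw [hdiff, mul_add]
  refine (norm_sub_le _ _).trans (add_le_add ?_ ?_)
  · exact norm_setIntegral_le_of_norm_le_const ((measure_mono sdiff_subset).trans_lt hμs)
      fun y hy => hM y (.inl hy.1)
  · exact norm_setIntegral_le_of_norm_le_const ((measure_mono sdiff_subset).trans_lt hμt)
      fun y hy => hM y (.inr hy.1)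

variable [CompleteSpace F]

theorem setAverage_sub_setAverage_eq {f : α → F} (hμ : μ.real s = μ.real t) (hμs : μ s ≠ ⊤)
    (hμt : μ t ≠ ⊤) (hfs : IntegrableOn f s μ) (hft : IntegrableOn f t μ) (c : F) :
    ⨍ y in s, f y ∂μ - ⨍ y in t, f y ∂μ
      = (μ.real s)⁻¹ • (∫ y in s, (f y - c) ∂μ - ∫ y in t, (f y - c) ∂μ) := by
  rw [integral_sub hfs (integrableOn_const hμs), integral_sub hft (integrableOn_const hμt),
    setIntegral_const, setIntegral_const, setAverage_eq, setAverage_eq, ← hμ, ← smul_sub]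
  congr 1
  abel

theorem dist_setAverage_le_of_forall_dist_le {f : α → F} {c : F} {M : ℝ}
    (hs : MeasurableSet s) (hμ₀ : μ s ≠ 0) (hμ : μ s ≠ ⊤) (hf : IntegrableOn f s μ)
    (hM : ∀ y ∈ s, dist (f y) c ≤ M) :
    dist (⨍ y in s, f y ∂μ) c ≤ M :=
  (convex_closedBall c M).set_average_mem isClosed_closedBall hμ₀ hμ
    ((ae_restrict_iff' hs).2 (ae_of_all _ hM)) hf

end SetIntegral

section AddHaar

variable {E : Type*} [NormedAddCommGroup E] [NormedSpace ℝ E] [FiniteDimensional ℝ E]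
  [MeasurableSpace E] [BorelSpace E] (μ : Measure E) [μ.IsAddHaarMeasure]

theorem measureReal_ball_sdiff_ball_le {x z : E} (hxz : dist x z ≤ 1) :
    μ.real (ball x 1 \ ball z 1) ≤ finrank ℝ E * dist x z * μ.real (ball x 1) := by
  rcases subsingleton_or_nontrivial E with hE | hE
  · simp [Subsingleton.elim x z]
  set d := dist x z
  have hd : 0 ≤ d := dist_nonneg
  have hball (r : ℝ) (hr : 0 ≤ r) :
      μ.real (ball x r) = r ^ finrank ℝ E * μ.real (ball x 1) := by
    rw [measureReal_def, measureReal_def, Measure.addHaar_ball μ x hr,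
      Measure.addHaar_ball μ x zero_le_one, one_pow, ENNReal.ofReal_one, one_mul,
      ENNReal.toReal_mul, ENNReal.toReal_ofReal (by positivity)]
  have hsub : ball x (1 - d) ⊆ ball z 1 := fun y hy => by
    rw [mem_ball] at hy ⊢
    linarith [dist_triangle y x z]
  have hbern : 1 - finrank ℝ E * d ≤ (1 - d) ^ finrank ℝ E := by
    simpa [sub_eq_add_neg] using one_add_mul_le_pow (by linarith : (-2 : ℝ) ≤ -d) (finrank ℝ E)
  calc μ.real (ball x 1 \ ball z 1)
      ≤ μ.real (ball x 1 \ ball x (1 - d)) :=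
        measureReal_mono (sdiff_subset_sdiff_right hsub)
          (measure_ne_top_of_subset sdiff_subset measure_ball_lt_top.ne)
    _ = (1 - (1 - d) ^ finrank ℝ E) * μ.real (ball x 1) := by
        rw [measureReal_sdiff (ball_subset_ball (by linarith)) measurableSet_ball,
          hball (1 - d) (by linarith)]
        ring
    _ ≤ finrank ℝ E * d * μ.real (ball x 1) := by
        gcongr
        linarith

end AddHaar

def CoarselyLipschitzWith {X Y : Type*} [PseudoMetricSpace X] [PseudoMetricSpace Y] (L : ℝ)
    (f : X → Y) : Prop :=
  ∀ x z, dist (f x) (f z) ≤ L * (dist x z + 1)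

namespace CoarselyLipschitzWith

section PseudoMetricSpace

variable {X Y : Type*} [PseudoMetricSpace X] [PseudoMetricSpace Y] {L : ℝ} {f : X → Y}

theorem nonneg (hf : CoarselyLipschitzWith L f) (x : X) : 0 ≤ L := by
  simpa using hf x x

theorem dist_le_of_dist_le (hf : CoarselyLipschitzWith L f) {x z : X} {r : ℝ}
    (h : dist x z ≤ r) : dist (f x) (f z) ≤ L * (r + 1) :=
  (hf x z).trans (mul_le_mul_of_nonneg_left (by linarith) (hf.nonneg x))

end PseudoMetricSpace

section ProperSpace

variable {X F : Type*} [PseudoMetricSpace X] [ProperSpace X] [MeasurableSpace X]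
  [OpensMeasurableSpace X] {μ : Measure X} [IsFiniteMeasureOnCompacts μ]
  [NormedAddCommGroup F] {L : ℝ} {f : X → F}

theorem integrableOn_ball (hf : CoarselyLipschitzWith L f) (hfm : AEStronglyMeasurable f μ)
    (x : X) (r : ℝ) : IntegrableOn f (ball x r) μ := by
  refine Measure.integrableOn_of_bounded (M := ‖f x‖ + L * (r + 1)) measure_ball_lt_top.ne hfm
    ((ae_restrict_iff' measurableSet_ball).2 (ae_of_all _ fun y hy => ?_))
  have := hf.dist_le_of_dist_le (mem_ball.1 hy).le
  rw [dist_eq_norm] at this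
  linarith [norm_le_norm_add_norm_sub' (f y) (f x)]

theorem dist_ballAverage_self_le [NormedSpace ℝ F] [CompleteSpace F] [μ.IsOpenPosMeasure]
    (hf : CoarselyLipschitzWith L f) (hfm : AEStronglyMeasurable f μ) (x : X) {r : ℝ} (hr : 0 < r) :
    dist (⨍ y in ball x r, f y ∂μ) (f x) ≤ L * (r + 1) :=
  dist_setAverage_le_of_forall_dist_le measurableSet_ball (measure_ball_pos μ x hr).ne'
    measure_ball_lt_top.ne (hf.integrableOn_ball hfm x r)
    fun _ hy => hf.dist_le_of_dist_le (mem_ball.1 hy).le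

end ProperSpace

section AddHaar

variable {E F : Type*} [NormedAddCommGroup E] [NormedSpace ℝ E] [FiniteDimensional ℝ E]
  [MeasurableSpace E] [BorelSpace E] {μ : Measure E} [μ.IsAddHaarMeasure]
  [NormedAddCommGroup F] [NormedSpace ℝ F] [CompleteSpace F] {L : ℝ} {f : E → F}

theorem dist_ballAverage_ballAverage_le_of_dist_le_one (hf : CoarselyLipschitzWith L f)
    (hfm : AEStronglyMeasurable f μ) {x z : E} (hxz : dist x z ≤ 1) :
    dist (⨍ y in ball x 1, f y ∂μ) (⨍ y in ball z 1, f y ∂μ)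
      ≤ 6 * finrank ℝ E * L * dist x z := by
  have hVz : μ.real (ball z 1) = μ.real (ball x 1) := by
    rw [Measure.addHaar_real_ball_center μ z, Measure.addHaar_real_ball_center μ x]
  set V := μ.real (ball x 1)
  have hV : 0 < V :=
    ENNReal.toReal_pos (measure_ball_pos μ x one_pos).ne' measure_ball_lt_top.ne
  have hbound : ∀ y ∈ ball x 1 ∪ ball z 1, ‖f y - f x‖ ≤ L * (2 + 1) := fun y hy => by
    rw [← dist_eq_norm]
    refine hf.dist_le_of_dist_le ?_
    rcases hy with hy | hy
    · linarith [mem_ball.1 hy]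
    · linarith [mem_ball.1 hy, dist_triangle y z x, dist_comm x z]
  have hsdiff := measureReal_ball_sdiff_ball_le μ hxz
  have hsdiff' := measureReal_ball_sdiff_ball_le μ ((dist_comm z x).le.trans hxz)
  rw [hVz, dist_comm z x] at hsdiff'
  rw [dist_eq_norm, setAverage_sub_setAverage_eq hVz.symm measure_ball_lt_top.ne
    measure_ball_lt_top.ne (hf.integrableOn_ball hfm x 1) (hf.integrableOn_ball hfm z 1) (f x),
    norm_smul, Real.norm_of_nonneg (inv_nonneg.2 hV.le)]
  have hL := hf.nonneg x
  calc V⁻¹ * ‖∫ y in ball x 1, (f y - f x) ∂μ - ∫ y in ball z 1, (f y - f x) ∂μ‖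
      ≤ V⁻¹ * (L * (2 + 1)
          * (μ.real (ball x 1 \ ball z 1) + μ.real (ball z 1 \ ball x 1))) := by
        gcongr
        exact norm_setIntegral_sub_setIntegral_le measurableSet_ball measurableSet_ball
          ((hf.integrableOn_ball hfm x 1).sub (integrableOn_const measure_ball_lt_top.ne))
          ((hf.integrableOn_ball hfm z 1).sub (integrableOn_const measure_ball_lt_top.ne))
          measure_ball_lt_top measure_ball_lt_top hbound
    _ ≤ V⁻¹ * (L * (2 + 1)
          * (finrank ℝ E * dist x z * V + finrank ℝ E * dist x z * V)) := by
        gcongr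
    _ = 6 * finrank ℝ E * L * dist x z := by
        field_simp
        ring

theorem dist_ballAverage_ballAverage_le (hf : CoarselyLipschitzWith L f)
    (hfm : AEStronglyMeasurable f μ) (x z : E) :
    dist (⨍ y in ball x 1, f y ∂μ) (⨍ y in ball z 1, f y ∂μ)
      ≤ 6 * finrank ℝ E * L * dist x z := by
  rcases le_or_gt (dist x z) 1 with hxz | hxz
  · exact hf.dist_ballAverage_ballAverage_le_of_dist_le_one hfm hxz
  have : Nontrivial E := nontrivial_of_ne x z (dist_pos.1 (by linarith))
  have hn : (1 : ℝ) ≤ finrank ℝ E := by exact_mod_cast finrank_pos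
  have hL := hf.nonneg x
  have hx := hf.dist_ballAverage_self_le hfm x one_pos (μ := μ)
  have hz := hf.dist_ballAverage_self_le hfm z one_pos (μ := μ)
  calc dist (⨍ y in ball x 1, f y ∂μ) (⨍ y in ball z 1, f y ∂μ)
      ≤ dist (⨍ y in ball x 1, f y ∂μ) (f x) + dist (f x) (f z)
        + dist (f z) (⨍ y in ball z 1, f y ∂μ) := dist_triangle4 _ _ _ _
    _ ≤ L * (1 + 1) + L * (dist x z + 1) + L * (1 + 1) := by
        rw [dist_comm (f z)]
        gcongr
        exact hf x z
    _ ≤ 6 * finrank ℝ E * L * dist x z := by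
        nlinarith [mul_le_mul_of_nonneg_left hn (mul_nonneg hL (by linarith : 0 ≤ dist x z))]

end AddHaar

end CoarselyLipschitzWith

/-- **Mollification of coarsely Lipschitz maps (Euclidean setting).**
For every `n ≥ 1` there is a constant `C`, depending only on `n`, such that
every strongly measurable `L`-coarsely Lipschitz map `f : ℝⁿ → E` into a real
Banach space `E` lies within distance `2·L` of a map `g` that is Lipschitz with
constant `C·L`. -/
theorem mollification_of_coarse_lipschitz (n : ℕ) (hn : 1 ≤ n) :
    ∃ C : ℝ, 0 < C ∧
      ∀ (E : Type) (_ : NormedAddCommGroup E) (_ : NormedSpace ℝ E)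
        (_ : CompleteSpace E) (L : ℝ), 0 ≤ L →
        ∀ f : EuclideanSpace ℝ (Fin n) → E,
          MeasureTheory.StronglyMeasurable f →
          (∀ x z, ‖f x - f z‖ ≤ L * (‖x - z‖ + 1)) →
          ∃ g : EuclideanSpace ℝ (Fin n) → E,
            (∀ x z, ‖g x - g z‖ ≤ C * L * ‖x - z‖) ∧
            (∀ x, ‖g x - f x‖ ≤ 2 * L) := by
  refine ⟨6 * n, by positivity, fun E _ _ _ L _ f hfm hcoarse => ?_⟩
  have hf : CoarselyLipschitzWith L f := by
    simpa only [CoarselyLipschitzWith, dist_eq_norm] using hcoarse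
  refine ⟨fun x => ⨍ y in ball x 1, f y, fun x z => ?_, fun x => ?_⟩
  · simpa only [dist_eq_norm, finrank_euclideanSpace_fin] using
      hf.dist_ballAverage_ballAverage_le hfm.aestronglyMeasurable x z
  · simpa only [dist_eq_norm, one_add_one_eq_two, mul_comm L] using
      hf.dist_ballAverage_self_le hfm.aestronglyMeasurable x one_pos
end

section
/- The Θ-separation of the symmetric space of PGL_d(ℝ) is 1/(d−1) (the computation behind the paper's Proposition 'separation is nonnegative' and its example ε(Y_d) = 1/(d−1)): Let d ≥ 2 be an integer and for 1 ≤ k ≤ d−1 define the fundamental coweight ω_k ∈ ℝ^d (with the standard inner product) by (ω_k)_l = 1 − k/d for 1 ≤ l ≤ k and (ω_k)_l = −k/d for k < l ≤ d. Then: (a) for 1 ≤ i ≤ j ≤ d−1, ⟨ω_i, ω_j⟩ = i·(d−j)/d and ‖ω_k‖² = k·(d−k)/d; (b) for all 1 ≤ i, j ≤ d−1, (d−1)·⟨ω_i, ω_j⟩ ≥ ‖ω_i‖·‖ω_j‖; and (c) equality holds in (b) for i = 1, j = d−1. Equivalently, the minimum over all pairs i, j of the cosine of the angle between ω_i and ω_j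 equals 1/(d−1). -/
/-!
Writing `ω_k = 𝟙_{[0,k)} - (k/d) 𝟙`, one gets `⟨ω_i, ω_j⟩ = min i j - i j / d`. For `i ≤ j`, after
squaring and cancelling `i (d - j) / d²`, the inequality `‖ω_i‖ ‖ω_j‖ ≤ (d - 1) ⟨ω_i, ω_j⟩` becomes
`(d - i) j ≤ ((d - 1) i) ((d - 1) (d - j))`, which holds factor by factor since `1 ≤ i` and
`j ≤ d - 1`; both factor bounds are equalities for `i = 1`, `j = d - 1`.
-/

/-- The fundamental coweight `ω_k` of the root system `A_{d−1}`, realized in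
`ℝ^d`: its `l`-th coordinate (1-indexed: `l ≤ k`, i.e. 0-indexed `l < k`) is
`1 − k/d`, and the remaining coordinates are `−k/d`. -/
noncomputable def omegaCoweight (d k : ℕ) : EuclideanSpace ℝ (Fin d) :=
  WithLp.toLp 2 fun l => if (l : ℕ) < k then 1 - (k : ℝ) / d else -((k : ℝ) / d)

open Finset

lemma omegaCoweight_apply (d k : ℕ) (l : Fin d) :
    omegaCoweight d k l = (if (l : ℕ) < k then 1 else 0) - (k : ℝ) / d := by
  simp only [omegaCoweight, PiLp.toLp_apply]
  split_ifs <;> ring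

lemma sum_fin_ite_val_lt (d k : ℕ) (hk : k ≤ d) :
    ∑ l : Fin d, (if (l : ℕ) < k then (1 : ℝ) else 0) = k := by
  rw [sum_boole, Fin.card_filter_val_lt, min_eq_right hk]

lemma inner_omegaCoweight_of_le {d i j : ℕ} (hij : i ≤ j) (hj : j ≤ d) :
    inner ℝ (omegaCoweight d i) (omegaCoweight d j) = (i : ℝ) * ((d : ℝ) - j) / d := by
  obtain rfl | hd := Nat.eq_zero_or_pos d
  · simp [PiLp.inner_apply]
  have hterm : ∀ l : Fin d, omegaCoweight d i l * omegaCoweight d j l =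
      (if (l : ℕ) < i then 1 else 0) * (1 - j / d) - i / d * (if (l : ℕ) < j then 1 else 0)
        + i * j / d ^ 2 := by
    intro l
    rw [omegaCoweight_apply, omegaCoweight_apply]
    split_ifs <;> first | omega | ring
  simp only [PiLp.inner_apply, RCLike.inner_apply, conj_trivial, mul_comm (omegaCoweight d j _),
    hterm, sum_add_distrib, sum_sub_distrib, ← sum_mul, ← mul_sum,
    sum_fin_ite_val_lt d i (hij.trans hj), sum_fin_ite_val_lt d j hj, sum_const, card_univ,
    Fintype.card_fin, nsmul_eq_mul]
  field_simp
  ring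

lemma norm_omegaCoweight_sq {d k : ℕ} (hk : k ≤ d) :
    ‖omegaCoweight d k‖ ^ 2 = (k : ℝ) * ((d : ℝ) - k) / d := by
  rw [← real_inner_self_eq_norm_sq, inner_omegaCoweight_of_le le_rfl hk]

lemma norm_omegaCoweight_sub {d k : ℕ} (hk : k ≤ d) :
    ‖omegaCoweight d (d - k)‖ = ‖omegaCoweight d k‖ := by
  rw [← sq_eq_sq₀ (norm_nonneg _) (norm_nonneg _), norm_omegaCoweight_sq (Nat.sub_le d k),
    norm_omegaCoweight_sq hk, Nat.cast_sub hk]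
  ring

lemma norm_mul_norm_omegaCoweight_le_of_le {d i j : ℕ} (hi : 1 ≤ i) (hij : i ≤ j) (hj : j < d) :
    ‖omegaCoweight d i‖ * ‖omegaCoweight d j‖ ≤
      ((d : ℝ) - 1) * inner ℝ (omegaCoweight d i) (omegaCoweight d j) := by
  have hi' : (1 : ℝ) ≤ i := by exact_mod_cast hi
  have hj' : (j : ℝ) + 1 ≤ d := by exact_mod_cast hj
  have hd : (0 : ℝ) < d := by linarith
  have hdj : (0 : ℝ) ≤ d - j := by linarith
  rw [inner_omegaCoweight_of_le hij hj.le, ← sq_le_sq₀ (by positivity)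
      (mul_nonneg (by linarith) (div_nonneg (mul_nonneg (by positivity) hdj) hd.le)),
    mul_pow, norm_omegaCoweight_sq (hij.trans hj.le), norm_omegaCoweight_sq hj.le]
  calc (i : ℝ) * (d - i) / d * (j * (d - j) / d) = i * (d - j) * ((d - i) * j) / d ^ 2 := by
        field_simp
    _ ≤ i * (d - j) * (((d - 1) * i) * ((d - 1) * (d - j))) / d ^ 2 := by
        gcongr <;> nlinarith
    _ = ((d - 1) * (i * (d - j) / d)) ^ 2 := by ring

/-- **The Π-separation of the symmetric space of `PGL_d(ℝ)` is `1/(d−1)`.**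
(a) For `1 ≤ i ≤ j ≤ d−1`, `⟨ω_i, ω_j⟩ = i(d−j)/d` and `‖ω_k‖² = k(d−k)/d`;
(b) for all `1 ≤ i, j ≤ d−1`, `(d−1)·⟨ω_i, ω_j⟩ ≥ ‖ω_i‖·‖ω_j‖`;
(c) equality holds in (b) for `i = 1`, `j = d−1`. -/
theorem pgl_separation (d : ℕ) (hd : 2 ≤ d) :
    (∀ i j : ℕ, 1 ≤ i → i ≤ j → j ≤ d - 1 →
      (inner ℝ (omegaCoweight d i) (omegaCoweight d j) : ℝ) =
        (i : ℝ) * ((d : ℝ) - (j : ℝ)) / d) ∧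
    (∀ k : ℕ, 1 ≤ k → k ≤ d - 1 →
      ‖omegaCoweight d k‖ ^ 2 = (k : ℝ) * ((d : ℝ) - (k : ℝ)) / d) ∧
    (∀ i j : ℕ, 1 ≤ i → i ≤ d - 1 → 1 ≤ j → j ≤ d - 1 →
      ‖omegaCoweight d i‖ * ‖omegaCoweight d j‖ ≤
        ((d : ℝ) - 1) * (inner ℝ (omegaCoweight d i) (omegaCoweight d j) : ℝ)) ∧
    (((d : ℝ) - 1) * (inner ℝ (omegaCoweight d 1) (omegaCoweight d (d - 1)) : ℝ) =
      ‖omegaCoweight d 1‖ * ‖omegaCoweight d (d - 1)‖) := by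
  refine ⟨fun i j _ hij hj => inner_omegaCoweight_of_le hij (by omega),
    fun k _ hk => norm_omegaCoweight_sq (by omega), fun i j hi hi' hj hj' => ?_, ?_⟩
  · rcases le_total i j with hij | hji
    · exact norm_mul_norm_omegaCoweight_le_of_le hi hij (by omega)
    · rw [real_inner_comm, mul_comm]
      exact norm_mul_norm_omegaCoweight_le_of_le hj hji (by omega)
  · rw [norm_omegaCoweight_sub (by omega : 1 ≤ d), ← sq, norm_omegaCoweight_sq (by omega),
      inner_omegaCoweight_of_le (by omega) (by omega), Nat.cast_sub (by omega)]
    field_simp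
    ring
end
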